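/- Let (g,[·,·]) be a Super-Lie superalgebra of parity p and let R : g → g be a homogeneous linear map of parity r that is a right Rota-Baxter operator, i.e. [R(x),R(y)] = R((-1)^{r(|x|+r+p)}[R(x),y] + [x,R(y)]) for all homogeneous x,y. Then the product x◁y := [x,R(y)] defines a super-right-symmetric superalgebra structure of parity r+p on g: ass_◁(x,y,z) = (-1)^{(|y|+r+p)(|z|+r+p)} ass_◁(x,z,y). -/

import Mathlib

/-- The sign `(-1)^e` for `e : ZMod 2`. -/
def pm (K : Type*) [Field K] (e : ZMod 2) : K := (-1 : K) ^ e.val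

theorem pm_add (K : Type*) [Field K] (a b : ZMod 2) : pm K (a + b) = pm K a * pm K b := by
  rw [pm, ZMod.val_add, ← neg_one_pow_eq_pow_mod_two, pow_add, pm, pm]

namespace LinearMap

variable {K V : Type*} [CommRing K] [AddCommGroup V] [Module K V]

def associator (μ : V →ₗ[K] V →ₗ[K] V) (x y z : V) : V := μ (μ x y) z - μ x (μ y z)

/-- The associator of `x ◁ y := [x, R y]`: one Leibniz step moves `[x, [R y, R z]]` out, the
Rota-Baxter identity turns it into `ε • [x, R [R y, z]] + [x, R [y, R z]]`, and skew-symmetry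
turns `[R y, z]` into `[z, R y]`. -/
theorem associator_compl₂_eq_smul (m : V →ₗ[K] V →ₗ[K] V) (R : V →ₗ[K] V) {x y z : V}
    {ε σ s : K}
    (hleib : m (m x (R y)) (R z) = m x (m (R y) (R z)) + s • m (m x (R z)) (R y))
    (hRB : m (R y) (R z) = R (ε • m (R y) z + m y (R z)))
    (hskew : m (R y) z = -σ • m z (R y)) (hs : ε * σ = s) :
    associator (m.compl₂ R) x y z = s • associator (m.compl₂ R) x z y := by
  subst hs
  simp only [associator, compl₂_apply]
  rw [hleib, hRB, hskew]
  simp only [map_add, map_smul, smul_sub]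
  module

end LinearMap

theorem stmt_7_general (K V : Type*) [Field K] [AddCommGroup V] [Module K V]
    (G : ZMod 2 → Submodule K V) (p : ZMod 2) (m : V →ₗ[K] V →ₗ[K] V)
    (hskew : ∀ i j : ZMod 2, ∀ x ∈ G i, ∀ y ∈ G j,
      m x y = (-(pm K ((i + p) * (j + p)))) • m y x)
    (hjac : ∀ i j k : ZMod 2, ∀ x ∈ G i, ∀ y ∈ G j, ∀ z ∈ G k,
      m (m x y) z = m x (m y z) + pm K ((j + p) * (k + p)) • m (m x z) y)
    (r : ZMod 2) (R : V →ₗ[K] V)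
    (hRg : ∀ i : ZMod 2, ∀ x ∈ G i, R x ∈ G (i + r))
    (hRB : ∀ i j : ZMod 2, ∀ x ∈ G i, ∀ y ∈ G j,
      m (R x) (R y) = R (pm K (r * (i + r + p)) • m (R x) y + m x (R y))) :
    ∀ i j k : ZMod 2, ∀ x ∈ G i, ∀ y ∈ G j, ∀ z ∈ G k,
      m (m x (R y)) (R z) - m x (R (m y (R z)))
        = pm K ((j + r + p) * (k + r + p)) •
            (m (m x (R z)) (R y) - m x (R (m z (R y)))) := by
  intro i j k x hx y hy z hz
  have hRy := hRg j y hy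
  have hRz := hRg k z hz
  refine LinearMap.associator_compl₂_eq_smul m R (hjac i _ _ x hx _ hRy _ hRz)
    (hRB j k y hy z hz) (hskew _ k _ hRy z hz) ?_
  rw [← pm_add]
  congr 1
  ring

/-- if `R` is a right Rota-Baxter operator of parity `r` on a Super-Lie
superalgebra of parity `p`, then `x ◁ y := [x, R y]` is super-right-symmetric of parity
`r + p`. -/
theorem stmt_7 (K V : Type*) [Field K] [AddCommGroup V] [Module K V]
    (G : ZMod 2 → Submodule K V) (p : ZMod 2) (m : V →ₗ[K] V →ₗ[K] V)
    (hgrad : ∀ i j : ZMod 2, ∀ x ∈ G i, ∀ y ∈ G j, m x y ∈ G (i + j + p))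
    (hskew : ∀ i j : ZMod 2, ∀ x ∈ G i, ∀ y ∈ G j,
      m x y = (-(pm K ((i + p) * (j + p)))) • m y x)
    (hjac : ∀ i j k : ZMod 2, ∀ x ∈ G i, ∀ y ∈ G j, ∀ z ∈ G k,
      m (m x y) z = m x (m y z) + pm K ((j + p) * (k + p)) • m (m x z) y)
    (r : ZMod 2) (R : V →ₗ[K] V)
    (hRg : ∀ i : ZMod 2, ∀ x ∈ G i, R x ∈ G (i + r))
    (hRB : ∀ i j : ZMod 2, ∀ x ∈ G i, ∀ y ∈ G j,
      m (R x) (R y) = R (pm K (r * (i + r + p)) • m (R x) y + m x (R y))) :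
    ∀ i j k : ZMod 2, ∀ x ∈ G i, ∀ y ∈ G j, ∀ z ∈ G k,
      m (m x (R y)) (R z) - m x (R (m y (R z)))
        = pm K ((j + r + p) * (k + r + p)) •
            (m (m x (R z)) (R y) - m x (R (m z (R y)))) :=
  stmt_7_general K V G p m hskew hjac r R hRg hRB
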